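/- arXiv:2402.11397 — 5 statements merged into one kernel-verified Lean document; each statement's English description precedes it below -/
import Mathlib

section
/- Let N be a natural number and let b_0, b_1, …, b_N be real numbers with b_N ≠ 0. For each k ∈ {0, 1, …, N} define the real polynomial in two variables p_k(α, c) = c^{N−k} · Σ_{s=k}^{N} binom(s, k) · b_s · α^s. Then the family (p_k)_{k=0}^{N} is linearly independent over ℝ in the ring ℝ[α, c] of polynomials in two variables. -/
open MvPolynomial

/-- For real numbers `b_0, …, b_N` with `b_N ≠ 0`, the bivariate
polynomials `p_k(α, c) = c^{N−k} ⬝ ∑_{s=k}^N (s choose k) b_s α^s`, `k = 0, …, N`,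
are linearly independent over `ℝ` in `ℝ[α, c]` (here `X 0 = α`, `X 1 = c`). -/
theorem stmt6 (N : ℕ) (b : ℕ → ℝ) (hb : b N ≠ 0) :
    LinearIndependent ℝ (fun k : Fin (N + 1) =>
      (X 1 : MvPolynomial (Fin 2) ℝ) ^ (N - (k : ℕ)) *
        ∑ s ∈ Finset.Icc (k : ℕ) N,
          C ((s.choose (k : ℕ) : ℝ) * b s) * (X 0 : MvPolynomial (Fin 2) ℝ) ^ s) := by
  rw [Fintype.linearIndependent_iff]
  intro g hg k
  have h := congrArg (coeff (Finsupp.single (1 : Fin 2) (N - (k:ℕ)) + Finsupp.single (0 : Fin 2) N)) hg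
  have key : ∀ j : Fin (N+1),
      coeff (Finsupp.single (1 : Fin 2) (N - (k:ℕ)) + Finsupp.single (0 : Fin 2) N)
        ((X 1 : MvPolynomial (Fin 2) ℝ) ^ (N - (j : ℕ)) *
          ∑ s ∈ Finset.Icc (j : ℕ) N,
            C ((s.choose (j : ℕ) : ℝ) * b s) * (X 0 : MvPolynomial (Fin 2) ℝ) ^ s)
      = if j = k then (N.choose (k:ℕ) : ℝ) * b N else 0 := by
    intro j
    rw [Finset.mul_sum, coeff_sum]
    have : ∀ s ∈ Finset.Icc (j : ℕ) N,
        (X 1 : MvPolynomial (Fin 2) ℝ) ^ (N - (j : ℕ)) *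
          (C ((s.choose (j : ℕ) : ℝ) * b s) * (X 0 : MvPolynomial (Fin 2) ℝ) ^ s)
        = monomial (Finsupp.single (1 : Fin 2) (N - (j:ℕ)) + Finsupp.single (0 : Fin 2) s)
            ((s.choose (j : ℕ) : ℝ) * b s) := by
      intro s _
      rw [C_mul_X_pow_eq_monomial, ← mul_one ((X (1 : Fin 2) : MvPolynomial (Fin 2) ℝ) ^ (N - (j:ℕ)))]
      rw [show ((X (1 : Fin 2) : MvPolynomial (Fin 2) ℝ) ^ (N - (j:ℕ)) * 1) = monomial (Finsupp.single (1 : Fin 2) (N - (j:ℕ))) 1 by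
        rw [← C_mul_X_pow_eq_monomial]; simp]
      rw [monomial_mul, one_mul]
    rw [Finset.sum_congr rfl (fun s hs => congrArg _ (this s hs))]
    simp only [coeff_monomial]
    by_cases hj : j = k
    · subst hj
      rw [Finset.sum_eq_single N]
      · simp
      · intro s hs hsN
        rw [if_neg]
        intro hc
        apply hsN
        have := DFunLike.congr_fun hc 0
        simpa using this
      · intro hN
        simp [Fin.is_le j] at hN
    · rw [if_neg hj, Finset.sum_eq_zero]
      intro s hs
      rw [if_neg]
      intro hc
      have h1 := DFunLike.congr_fun hc 1
      simp [Finsupp.single_apply] at h1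
      have hjle : (j:ℕ) ≤ N := Fin.is_le j
      have hkle : (k:ℕ) ≤ N := Fin.is_le k
      exact hj (Fin.ext (by omega))
  rw [coeff_sum] at h
  simp only [coeff_smul, key, smul_eq_mul, mul_ite, mul_zero, Finset.sum_ite_eq',
    Finset.mem_univ, if_true, coeff_zero] at h
  have hne : (N.choose (k:ℕ) : ℝ) * b N ≠ 0 :=
    mul_ne_zero (Nat.cast_ne_zero.mpr (Nat.choose_pos (Fin.is_le k)).ne') hb
  exact (mul_eq_zero.mp h).resolve_right hne
end

section
/- Let N ≥ 1 be an integer and let b_0, b_1, …, b_N be real numbers with b_N ≠ 0 (the coefficients of a polynomial Q(t) = Σ_{s=0}^N b_s·t^s of degree exactly N). Then there exist real numbers α_1, …, α_N and c_1, …, c_N such that the N × N real matrix M with entries M_{k,j} = Σ_{s=k}^{N} binom(s, k) · b_s · α_j^s · (−c_j)^{s−k}, for k, j ∈ {1, …, N}, is invertible. Here M_{k,j} is precisely the coefficient of x^k in the polynomial x ↦ Q(α_j·(x − c_j)). -/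
/-- Let `N ≥ 1` and `b_0, …, b_N ∈ ℝ` with `b_N ≠ 0` (the coefficients
of a polynomial `Q` of degree exactly `N`). Then there exist reals `α_1, …, α_N`
and `c_1, …, c_N` such that the `N × N` matrix with entries
`M_{k,j} = ∑_{s=k}^N (s choose k) b_s α_j^s (−c_j)^{s−k}`, for `k, j ∈ {1, …, N}`,
is invertible. (Below `k j : Fin N` represent the indices `k+1, j+1 ∈ {1,…,N}`.) -/
theorem stmt7 (N : ℕ) (hN : 1 ≤ N) (b : ℕ → ℝ) (hb : b N ≠ 0) :
    ∃ α c : Fin N → ℝ,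
      IsUnit (Matrix.of fun k j : Fin N =>
        ∑ s ∈ Finset.Icc ((k : ℕ) + 1) N,
          (s.choose ((k : ℕ) + 1) : ℝ) * b s * α j ^ s *
            (-(c j)) ^ (s - ((k : ℕ) + 1))) := by
  classical
  set c : Fin N → ℝ := fun j => ((j : ℕ) : ℝ) with hcdef
  refine ⟨fun _ => 1, c, ?_⟩
  set A : Matrix (Fin N) (Fin N) ℝ := Matrix.of (fun k m : Fin N =>
    if (m : ℕ) + ((k : ℕ) + 1) ≤ N then
      ((((m : ℕ) + ((k : ℕ) + 1)).choose ((k : ℕ) + 1) : ℝ) *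
        b ((m : ℕ) + ((k : ℕ) + 1)) * (-1 : ℝ) ^ (m : ℕ))
    else 0) with hAdef
  have hAV : IsUnit (A * (Matrix.vandermonde c).transpose) := by
    apply (Matrix.isUnit_iff_isUnit_det _).mpr
    rw [Matrix.det_mul, Matrix.det_transpose]
    apply isUnit_iff_ne_zero.mpr
    apply mul_ne_zero
    · -- det A ≠ 0
      have hperm := Matrix.det_permute' (Fin.revPerm : Equiv.Perm (Fin N)) A
      have htri : (A.submatrix id (Fin.revPerm : Equiv.Perm (Fin N))).BlockTriangular id := by
        intro i j hij
        have hij' : (j : ℕ) < (i : ℕ) := hij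
        simp only [Matrix.submatrix_apply, id_eq, Fin.revPerm_apply, hAdef, Matrix.of_apply]
        rw [if_neg]
        have hi := i.isLt
        have hj := j.isLt
        rw [Fin.val_rev]
        omega
      have hdiag : ∀ i : Fin N, (A.submatrix id (Fin.revPerm : Equiv.Perm (Fin N))) i i ≠ 0 := by
        intro i
        simp only [Matrix.submatrix_apply, id_eq, Fin.revPerm_apply, hAdef, Matrix.of_apply]
        have hi := i.isLt
        rw [Fin.val_rev, if_pos (by omega), show N - ((i : ℕ) + 1) + ((i : ℕ) + 1) = N by omega]
        refine mul_ne_zero (mul_ne_zero ?_ hb) (pow_ne_zero _ (by norm_num))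
        have hc0 : (0:ℕ) < N.choose ((i : ℕ) + 1) := Nat.choose_pos (by omega)
        exact_mod_cast hc0.ne'
      have hsub : (A.submatrix id (Fin.revPerm : Equiv.Perm (Fin N))).det ≠ 0 := by
        rw [Matrix.det_of_upperTriangular htri]
        exact Finset.prod_ne_zero_iff.mpr fun i _ => hdiag i
      intro hA0
      rw [hperm, hA0, mul_zero] at hsub
      exact hsub rfl
    · -- det vandermonde ≠ 0
      apply Matrix.det_vandermonde_ne_zero_iff.mpr
      intro i j hij
      rw [hcdef] at hij
      exact Fin.val_injective (Nat.cast_injective hij)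
  convert hAV using 1
  ext k j
  rw [Matrix.mul_apply]
  simp only [Matrix.of_apply, Matrix.transpose_apply, Matrix.vandermonde, hAdef,
    Matrix.of_apply, one_pow, mul_one, ite_mul, zero_mul]
  have hk := k.isLt
  -- RHS: ∑ m : Fin N, if ... ; convert to range sum
  rw [Fin.sum_univ_eq_sum_range (fun m =>
    if m + ((k : ℕ) + 1) ≤ N then
      ((m + ((k : ℕ) + 1)).choose ((k : ℕ) + 1) : ℝ) * b (m + ((k : ℕ) + 1)) * (-1 : ℝ) ^ m
        * c j ^ m
    else 0) N]
  rw [← Finset.sum_filter]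
  have hfilter : (Finset.range N).filter (fun m => m + ((k : ℕ) + 1) ≤ N)
      = Finset.range (N - (k : ℕ)) := by
    ext m
    simp only [Finset.mem_filter, Finset.mem_range]
    omega
  rw [hfilter]
  -- LHS
  rw [← Finset.Ico_add_one_right_eq_Icc, Finset.sum_Ico_eq_sum_range]
  rw [show N + 1 - ((k : ℕ) + 1) = N - (k : ℕ) by omega]
  refine Finset.sum_congr rfl fun m hm => ?_
  rw [show (k : ℕ) + 1 + m - ((k : ℕ) + 1) = m by omega,
    show (k : ℕ) + 1 + m = m + ((k : ℕ) + 1) by omega]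
  rw [neg_pow]
  ring
end

section
/- Let N ≥ 1 be an integer and let Q be a real polynomial of degree exactly N. Then there exist real numbers α_1, …, α_N and c_1, …, c_N such that the ℝ-linear span of the constant polynomial 1 together with the N polynomials x ↦ Q(α_j·(x − c_j)), j = 1,…,N, is equal to the space of all real polynomials of degree at most N; consequently, for every real polynomial P with deg P ≤ N there exists a unique pair (β⁰, w) ∈ ℝ × ℝ^N such that P(x) = β⁰ + Σ_{j=1}^N w_j · Q(α_j·(x − c_j)) for all x ∈ ℝ. -/
open Polynomial

/-- Let `N ≥ 1` and let `Q` be a real polynomial of degree exactly `N`.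
Then there exist reals `α_1, …, α_N` and `c_1, …, c_N` such that the `ℝ`-span of the
constant polynomial `1` together with the `N` polynomials `x ↦ Q(α_j (x − c_j))`
equals the space of all real polynomials of degree at most `N`; consequently every
real polynomial `P` with `deg P ≤ N` admits a unique pair `(β₀, w) ∈ ℝ × ℝ^N` with
`P(x) = β₀ + ∑_j w_j Q(α_j (x − c_j))` for all `x ∈ ℝ`. -/
theorem stmt8 (N : ℕ) (hN : 1 ≤ N) (Q : Polynomial ℝ) (hQ : Q.degree = (N : WithBot ℕ)) :
    ∃ α c : Fin N → ℝ,
      Submodule.span ℝ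
          ({1} ∪ Set.range fun j : Fin N =>
            Q.comp (Polynomial.C (α j) * (Polynomial.X - Polynomial.C (c j))))
        = Polynomial.degreeLE ℝ (N : WithBot ℕ) ∧
      ∀ P : Polynomial ℝ, P.degree ≤ (N : WithBot ℕ) →
        ∃! p : ℝ × (Fin N → ℝ),
          ∀ x : ℝ, P.eval x = p.1 + ∑ j, p.2 j * Q.eval (α j * (x - c j)) := by
  classical
  have hQ0 : Q ≠ 0 := fun h => by simp [h] at hQ
  have hNd : Q.natDegree = N := natDegree_eq_of_degree_eq_some hQ
  have hlc : Q.coeff N ≠ 0 := by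
    rw [← hNd]; exact mt leadingCoeff_eq_zero.mp hQ0
  refine ⟨fun _ => 1, fun j => -(j : ℝ), ?_⟩
  set f : Fin N → ℝ[X] := fun j : Fin N =>
    Q.comp (Polynomial.C (1:ℝ) * (Polynomial.X - Polynomial.C (-(j : ℝ)))) with hfdef
  have hf : ∀ j, f j = taylor ((j : ℕ) : ℝ) Q := by
    intro j; simp [hfdef, taylor_apply, sub_neg_eq_add]
  set v : Fin (N + 1) → ℝ[X] := Fin.cons 1 f with hvdef
  -- linear independence
  have hind : LinearIndependent ℝ v := by
    rw [Fintype.linearIndependent_iff]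
    intro g hg
    rw [Fin.sum_univ_succ] at hg
    simp only [hvdef, Fin.cons_zero, Fin.cons_succ] at hg
    have hrel : ∀ k : ℕ, k ≠ 0 →
        ∑ j : Fin N, g j.succ * (hasseDeriv k Q).eval ((j : ℕ) : ℝ) = 0 := by
      intro k hk
      have h1 := congrArg (fun p : ℝ[X] => p.coeff k) hg
      simp only [coeff_add, coeff_smul, finset_sum_coeff, coeff_one, hk, if_false,
        smul_eq_mul, mul_zero, zero_add, coeff_zero, hf, taylor_coeff] at h1
      exact h1
    have hw : ∀ j : Fin N, g j.succ = 0 := by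
      set p : Fin N → ℝ[X] := fun m =>
        hasseDeriv (N - (m : ℕ)) Q * Polynomial.C ((hasseDeriv (N - (m : ℕ)) Q).leadingCoeff)⁻¹
        with hpdef
      have hne : ∀ m : Fin N, hasseDeriv (N - (m : ℕ)) Q ≠ 0 := by
        intro m hz
        have hc : (hasseDeriv (N - (m : ℕ)) Q).coeff (m : ℕ) =
            (N.choose (N - (m : ℕ)) : ℝ) * Q.coeff N := by
          have hmN : (m : ℕ) + (N - (m : ℕ)) = N := by omega
          rw [hasseDeriv_coeff, hmN]
        rw [hz, coeff_zero] at hc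
        have := Nat.choose_pos (Nat.sub_le N (m : ℕ))
        have hch : ((N.choose (N - (m : ℕ)) : ℝ)) ≠ 0 := by positivity
        exact hlc ((mul_eq_zero.mp hc.symm).resolve_left hch)
      have hmono : ∀ m : Fin N, (p m).Monic := fun m => monic_mul_leadingCoeff_inv (hne m)
      have hdeg : ∀ m : Fin N, (p m).natDegree = (m : ℕ) := by
        intro m
        rw [hpdef]
        rw [natDegree_mul (hne m) (by
          simp only [ne_eq, C_eq_zero, inv_eq_zero, leadingCoeff_eq_zero]; exact hne m)]
        rw [natDegree_C, natDegree_hasseDeriv, hNd]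
        omega
      have hinj : Function.Injective (fun i : Fin N => ((i : ℕ) : ℝ)) := by
        intro i j h
        exact Fin.ext (Nat.cast_injective h)
      have hdet : (Matrix.of fun i j : Fin N => (p j).eval (((i : ℕ) : ℝ))).det ≠ 0 := by
        rw [← Matrix.det_eval_matrixOfPolynomials_eq_det_vandermonde _ p hdeg hmono]
        exact Matrix.det_vandermonde_ne_zero_iff.mpr hinj
      have hmv : Matrix.vecMul (fun j : Fin N => g j.succ)
          (Matrix.of fun i j : Fin N => (p j).eval (((i : ℕ) : ℝ))) = 0 := by
        funext m
        simp only [Matrix.vecMul, dotProduct, Matrix.of_apply, Pi.zero_apply]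
        have h1 := hrel (N - (m : ℕ)) (by omega)
        calc ∑ i : Fin N, g i.succ * (p m).eval (((i : ℕ) : ℝ))
            = (∑ i : Fin N, g i.succ * (hasseDeriv (N - (m : ℕ)) Q).eval (((i : ℕ) : ℝ)))
              * ((hasseDeriv (N - (m : ℕ)) Q).leadingCoeff)⁻¹ := by
              rw [Finset.sum_mul]
              refine Finset.sum_congr rfl fun i _ => ?_
              simp [hpdef, mul_assoc]
          _ = 0 := by rw [h1, zero_mul]
      have := Matrix.eq_zero_of_vecMul_eq_zero hdet hmv
      intro j; exact congrFun this j
    have hg0 : g 0 = 0 := by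
      have : (∑ j : Fin N, g j.succ • f j) = 0 := by
        refine Finset.sum_eq_zero fun j _ => by rw [hw j, zero_smul]
      rw [this, add_zero, smul_eq_zero] at hg
      exact hg.resolve_right one_ne_zero
    intro i
    refine Fin.cases hg0 hw i
  -- the set equals range v
  have hset : ({1} ∪ Set.range f : Set ℝ[X]) = Set.range v := by
    rw [hvdef, Fin.range_cons, Set.singleton_union]
  -- span ≤ degreeLE
  have hle : Submodule.span ℝ (Set.range v) ≤ degreeLE ℝ (N : WithBot ℕ) := by
    rw [Submodule.span_le]
    rintro _ ⟨i, rfl⟩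
    rw [SetLike.mem_coe, mem_degreeLE]
    refine Fin.cases ?_ ?_ i
    · simp only [hvdef, Fin.cons_zero, degree_one]
      exact_mod_cast Nat.cast_le.mpr (Nat.zero_le N)
    · intro j
      simp only [hvdef, Fin.cons_succ, hf]
      calc (taylor ((j:ℕ):ℝ) Q).degree ≤ ((taylor ((j:ℕ):ℝ) Q).natDegree : WithBot ℕ) :=
            degree_le_natDegree
        _ = (N : WithBot ℕ) := by rw [natDegree_taylor, hNd]
  haveI : FiniteDimensional ℝ (degreeLT ℝ (N + 1)) :=
    LinearEquiv.finiteDimensional (degreeLTEquiv ℝ (N + 1)).symm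
  have hfr : Module.finrank ℝ (degreeLT ℝ (N + 1)) = N + 1 := by
    rw [LinearEquiv.finrank_eq (degreeLTEquiv ℝ (N + 1)), Module.finrank_fin_fun]
  have hspan : Submodule.span ℝ (Set.range v) = degreeLE ℝ (N : WithBot ℕ) := by
    rw [← degreeLT_succ_eq_degreeLE] at hle ⊢
    refine Submodule.eq_of_le_of_finrank_le hle ?_
    rw [hfr, finrank_span_eq_card hind, Fintype.card_fin]
  constructor
  · rw [hset]; exact hspan
  · intro P hP
    -- bridge between eval statement and polynomial identity
    have key : ∀ a : ℝ, ∀ w : Fin N → ℝ,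
        (∀ x : ℝ, P.eval x = a + ∑ j, w j * Q.eval (1 * (x - -((j:ℕ):ℝ)))) ↔
        P = ∑ i, (Fin.cons a w : Fin (N + 1) → ℝ) i • v i := by
      intro a w
      have hev : ∀ x : ℝ,
          (∑ i, (Fin.cons a w : Fin (N + 1) → ℝ) i • v i).eval x
            = a + ∑ j, w j * Q.eval (1 * (x - -((j:ℕ):ℝ))) := by
        intro x
        rw [Fin.sum_univ_succ]
        simp only [Fin.cons_zero, Fin.cons_succ, hvdef, eval_add, eval_smul, smul_eq_mul,
          eval_one, mul_one, eval_finset_sum, hfdef, eval_comp, eval_mul, eval_sub, eval_C,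
          eval_X, eval_one]
      constructor
      · intro h
        refine Polynomial.funext fun x => ?_
        rw [hev x]; exact h x
      · intro h x
        rw [h, hev x]
    obtain ⟨g, hg⟩ : ∃ g : Fin (N + 1) → ℝ, ∑ i, g i • v i = P := by
      have : P ∈ Submodule.span ℝ (Set.range v) := by
        rw [hspan, mem_degreeLE]; exact hP
      exact (Submodule.mem_span_range_iff_exists_fun ℝ).mp this
    refine ⟨(g 0, fun j => g j.succ), ?_, ?_⟩
    · refine (key (g 0) (fun j => g j.succ)).mpr ?_
      rw [← hg]
      congr 1
      funext i
      congr 1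
      exact (congrFun (Fin.cons_self_tail g) i).symm
    · rintro ⟨a, w⟩ hq
      have h1 : P = ∑ i, (Fin.cons a w : Fin (N + 1) → ℝ) i • v i := (key a w).mp hq
      have h2 : ∑ i, (Fin.cons (g 0) (fun j => g j.succ) : Fin (N + 1) → ℝ) i • v i = P := by
        rw [← hg]; congr 1; funext i; congr 1
        exact congrFun (Fin.cons_self_tail g) i
      have h3 : ∀ i, (Fin.cons a w : Fin (N + 1) → ℝ) i
          = (Fin.cons (g 0) (fun j => g j.succ) : Fin (N + 1) → ℝ) i := by
        have hsub : ∑ i, ((Fin.cons a w : Fin (N + 1) → ℝ) i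
            - (Fin.cons (g 0) (fun j => g j.succ) : Fin (N + 1) → ℝ) i) • v i = 0 := by
          simp only [sub_smul, Finset.sum_sub_distrib, ← h1, h2, sub_self]
        intro i
        have := Fintype.linearIndependent_iff.mp hind _ hsub i
        linarith [this]
      have ha : a = g 0 := h3 0
      have hwz : w = fun j => g j.succ := funext fun j => h3 j.succ
      simp [ha, hwz]
end

section
/- Let a < b be real numbers, let ψ : ℝ → ℝ be a function, let N ≥ 1 be an integer, and let Q be a real polynomial of degree exactly N. Then for every real polynomial P of degree at most N there exist α_1,…,α_N, c_1,…,c_N ∈ ℝ, w ∈ ℝ^N and β⁰ ∈ ℝ such that the RPNN f_N(x) = β⁰ + Σ_{j=1}^N w_j · ψ(α_j·(x − c_j)) satisfies sup_{x ∈ [a,b]} |P(x) − f_N(x)| ≤ Σ_{j=1}^N |w_j| · sup_{x ∈ [a,b]} |ψ(α_j·(x − c_j)) − Q(α_j·(x − c_j))|; that is, the RPNN reproduces P exactly up to the error of replacing the polynomial Q by the activation ψ on the relevant arguments. -/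
open scoped ENNReal

open Polynomial

lemma taylor_coeff_top {f : Polynomial ℝ} {m : ℕ} (hdeg : f.natDegree ≤ m + 1) :
    (Polynomial.taylor (1:ℝ) f).coeff (m+1) = f.coeff (m+1) := by
  rw [Polynomial.taylor_coeff]
  have h1 : (hasseDeriv (m+1) f).natDegree ≤ 0 := by
    have := natDegree_hasseDeriv_le f (m+1)
    omega
  rw [Polynomial.eq_C_of_natDegree_le_zero h1, eval_C, hasseDeriv_coeff]
  simp

lemma taylor_coeff_sub {f : Polynomial ℝ} {m : ℕ} (hdeg : f.natDegree ≤ m + 1) :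
    (Polynomial.taylor (1:ℝ) f).coeff m = f.coeff m + (m+1) * f.coeff (m+1) := by
  rw [Polynomial.taylor_coeff]
  have h1 : (hasseDeriv m f).natDegree ≤ 1 := by
    have := natDegree_hasseDeriv_le f m
    omega
  rw [Polynomial.eq_X_add_C_of_natDegree_le_one h1]
  simp only [eval_add, eval_mul, eval_C, eval_X, mul_one, hasseDeriv_coeff]
  rw [add_comm 1 m, Nat.choose_succ_self_right, zero_add]
  push_cast
  simp [Nat.choose_self]
  ring

noncomputable def fdiff (Q : Polynomial ℝ) : ℕ → Polynomial ℝ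
  | 0 => Q
  | k+1 => Polynomial.taylor (1:ℝ) (fdiff Q k) - fdiff Q k

lemma fdiff_deg (Q : Polynomial ℝ) (N : ℕ) (hdeg : Q.natDegree ≤ N) (hlc : Q.coeff N ≠ 0) :
    ∀ k, k ≤ N → (fdiff Q k).natDegree ≤ N - k ∧ (fdiff Q k).coeff (N - k) ≠ 0 := by
  intro k
  induction k with
  | zero => intro _; simpa [fdiff] using ⟨hdeg, hlc⟩
  | succ k ih =>
    intro hk
    obtain ⟨h1, h2⟩ := ih (by omega)
    set f := fdiff Q k with hf
    have hm : N - k = (N - (k+1)) + 1 := by omega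
    set m := N - (k+1) with hmdef
    rw [hm] at h1 h2
    have hcoeff : ∀ n, m < n → (fdiff Q (k+1)).coeff n = 0 := by
      intro n hn
      show (Polynomial.taylor (1:ℝ) f - f).coeff n = 0
      rcases eq_or_lt_of_le (Nat.succ_le_of_lt hn) with h | h
      · rw [Polynomial.coeff_sub, ← h, taylor_coeff_top h1]
        exact sub_self _
      · have hfn : f.natDegree < n := lt_of_le_of_lt h1 h
        rw [Polynomial.coeff_sub,
          Polynomial.coeff_eq_zero_of_natDegree_lt
            (by rwa [Polynomial.natDegree_taylor]),
          Polynomial.coeff_eq_zero_of_natDegree_lt hfn, sub_zero]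
    refine ⟨Polynomial.natDegree_le_iff_coeff_eq_zero.mpr hcoeff, ?_⟩
    show (Polynomial.taylor (1:ℝ) f - f).coeff m ≠ 0
    rw [Polynomial.coeff_sub, taylor_coeff_sub h1]
    have : (m : ℝ) + 1 ≠ 0 := by positivity
    intro hcon
    apply h2
    have : ((m:ℝ)+1) * f.coeff (m+1) = 0 := by linarith [hcon]
    exact (mul_eq_zero.mp this).resolve_left ‹(m:ℝ)+1 ≠ 0›

lemma span_of_degrees (n : ℕ) (u : ℕ → Polynomial ℝ)
    (hu : ∀ k, k ≤ n → (u k).natDegree ≤ k ∧ (u k).coeff k ≠ 0) :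
    ∀ d, d ≤ n → ∀ p : Polynomial ℝ, p.natDegree ≤ d →
      p ∈ Submodule.span ℝ (u '' Set.Iic n) := by
  intro d
  induction d with
  | zero =>
    intro hd p hp
    have h0 := hu 0 hd
    have hu0 : u 0 = Polynomial.C ((u 0).coeff 0) := Polynomial.eq_C_of_natDegree_le_zero h0.1
    have hp0 : p = Polynomial.C (p.coeff 0) := Polynomial.eq_C_of_natDegree_le_zero hp
    have key : (p.coeff 0 / (u 0).coeff 0) • u 0 = p := by
      rw [hu0, Polynomial.coeff_C_zero, Polynomial.smul_C, smul_eq_mul,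
        div_mul_cancel₀ _ h0.2, ← hp0]
    rw [← key]
    exact Submodule.smul_mem _ _ (Submodule.subset_span ⟨0, hd, rfl⟩)
  | succ d ih =>
    intro hd p hp
    have h0 := hu (d+1) hd
    set c := p.coeff (d+1) / (u (d+1)).coeff (d+1) with hc
    set q := p - c • u (d+1) with hqdef
    have hq : q.natDegree ≤ d := by
      apply Polynomial.natDegree_le_iff_coeff_eq_zero.mpr
      intro n hn
      rw [hqdef, Polynomial.coeff_sub, Polynomial.coeff_smul, smul_eq_mul]
      rcases eq_or_lt_of_le (Nat.succ_le_of_lt hn) with h | h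
      · rw [← h, hc, div_mul_cancel₀ _ h0.2, sub_self]
      · rw [Polynomial.coeff_eq_zero_of_natDegree_lt (lt_of_le_of_lt hp h),
          Polynomial.coeff_eq_zero_of_natDegree_lt (lt_of_le_of_lt h0.1 h)]
        ring
    have hqs := ih (by omega) q hq
    have : p = q + c • u (d+1) := by rw [hqdef]; ring
    rw [this]
    exact Submodule.add_mem _ hqs
      (Submodule.smul_mem _ _ (Submodule.subset_span ⟨d+1, hd, rfl⟩))

lemma fdiff_mem (Q : Polynomial ℝ) :
    ∀ k, fdiff Q k ∈ Submodule.span ℝ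
      ((fun i : ℕ => Polynomial.taylor ((i:ℕ):ℝ) Q) '' Set.Iic k) := by
  intro k
  induction k with
  | zero =>
    refine Submodule.subset_span ⟨0, by simp, ?_⟩
    simp [fdiff, Polynomial.taylor_zero]
  | succ k ih =>
    show Polynomial.taylor (1:ℝ) (fdiff Q k) - fdiff Q k ∈ _
    have hmono : Submodule.span ℝ ((fun i : ℕ => Polynomial.taylor ((i:ℕ):ℝ) Q) '' Set.Iic k)
        ≤ Submodule.span ℝ ((fun i : ℕ => Polynomial.taylor ((i:ℕ):ℝ) Q) '' Set.Iic (k+1)) :=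
      Submodule.span_mono (Set.image_mono (Set.Iic_subset_Iic.mpr (by omega)))
    refine Submodule.sub_mem _ ?_ (hmono ih)
    have hmap := Submodule.mem_map_of_mem (f := Polynomial.taylor (1:ℝ)) ih
    rw [Submodule.map_span] at hmap
    refine Submodule.span_le.mpr ?_ hmap
    rintro x ⟨y, ⟨i, hi, rfl⟩, rfl⟩
    simp only [Set.mem_Iic] at hi
    refine Submodule.subset_span ⟨i+1, by simp; omega, ?_⟩
    show Polynomial.taylor (((i+1:ℕ)):ℝ) Q
      = Polynomial.taylor (1:ℝ) (Polynomial.taylor ((i:ℕ):ℝ) Q)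
    rw [Polynomial.taylor_taylor]
    congr 1
    push_cast
    ring

/-- Let `a < b`, `ψ : ℝ → ℝ`, `N ≥ 1`, and `Q` a real polynomial of
degree exactly `N`. For every real polynomial `P` with `deg P ≤ N` there exist
internal parameters `α_j, c_j`, external weights `w` and offset `β₀` such that the
RPNN `f_N(x) = β₀ + ∑_j w_j ψ(α_j (x − c_j))` satisfies
`sup_{[a,b]} |P − f_N| ≤ ∑_j |w_j| · sup_{[a,b]} |ψ(α_j(·−c_j)) − Q(α_j(·−c_j))|`.
The suprema are taken in `ℝ≥0∞` (they may be infinite, as `ψ` is arbitrary). -/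
theorem stmt10 (a b : ℝ) (hab : a < b) (ψ : ℝ → ℝ)
    (N : ℕ) (hN : 1 ≤ N) (Q : Polynomial ℝ) (hQ : Q.degree = (N : WithBot ℕ))
    (P : Polynomial ℝ) (hP : P.degree ≤ (N : WithBot ℕ)) :
    ∃ (α c : Fin N → ℝ) (w : Fin N → ℝ) (β₀ : ℝ),
      (⨆ x : Set.Icc a b, ENNReal.ofReal
          |P.eval (x : ℝ) - (β₀ + ∑ j, w j * ψ (α j * ((x : ℝ) - c j)))|)
        ≤ ∑ j, ENNReal.ofReal |w j| *
            ⨆ x : Set.Icc a b, ENNReal.ofReal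
              |ψ (α j * ((x : ℝ) - c j)) - Q.eval (α j * ((x : ℝ) - c j))| := by
  classical
  have hQ0 : Q ≠ 0 := fun h => by simp [h] at hQ
  have hQnd : Q.natDegree = N := Polynomial.natDegree_eq_of_degree_eq_some hQ
  have hlc : Q.coeff N ≠ 0 := by
    rw [← hQnd]; exact Polynomial.leadingCoeff_ne_zero.mpr hQ0
  set u : ℕ → Polynomial ℝ := fun k => if k = 0 then 1 else fdiff Q (N - k) with hu_def
  have hu : ∀ k, k ≤ N → (u k).natDegree ≤ k ∧ (u k).coeff k ≠ 0 := by
    intro k hk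
    by_cases hk0 : k = 0
    · subst hk0; simp [hu_def]
    · obtain ⟨h1, h2⟩ := fdiff_deg Q N hQnd.le hlc (N - k) (by omega)
      have hNk : N - (N - k) = k := by omega
      rw [hNk] at h1 h2
      simpa [hu_def, hk0] using ⟨h1, h2⟩
  have hPnd : P.natDegree ≤ N := Polynomial.natDegree_le_iff_degree_le.mpr hP
  have hPspan : P ∈ Submodule.span ℝ (u '' Set.Iic N) :=
    span_of_degrees N u hu N le_rfl P hPnd
  set v : Fin (N + 1) → Polynomial ℝ :=
    Fin.cons 1 (fun j : Fin N => Polynomial.taylor ((j : ℕ) : ℝ) Q) with hv_def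
  have hsub : u '' Set.Iic N ⊆ (Submodule.span ℝ (Set.range v) : Set (Polynomial ℝ)) := by
    rintro x ⟨k, hk, rfl⟩
    simp only [Set.mem_Iic] at hk
    by_cases hk0 : k = 0
    · subst hk0
      have : (1 : Polynomial ℝ) = v 0 := by simp [hv_def]
      rw [hu_def]; simp only [if_pos rfl, this]
      exact Submodule.subset_span ⟨0, rfl⟩
    · have hmem := fdiff_mem Q (N - k)
      have hsub2 : (fun i : ℕ => Polynomial.taylor ((i:ℕ):ℝ) Q) '' Set.Iic (N - k)
          ⊆ Set.range v := by
        rintro y ⟨i, hi, rfl⟩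
        simp only [Set.mem_Iic] at hi
        have hiN : i < N := by omega
        refine ⟨(⟨i, hiN⟩ : Fin N).succ, ?_⟩
        rw [hv_def, Fin.cons_succ]
      have : u k = fdiff Q (N - k) := by simp [hu_def, hk0]
      rw [this]
      exact Submodule.span_le.mpr (hsub2.trans Submodule.subset_span) hmem
  have hPv : P ∈ Submodule.span ℝ (Set.range v) :=
    Submodule.span_le.mpr hsub hPspan
  obtain ⟨t, ht⟩ := (Submodule.mem_span_range_iff_exists_fun ℝ).mp hPv
  refine ⟨fun _ => 1, fun j => -((j : ℕ) : ℝ), fun j => t j.succ, t 0, ?_⟩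
  have hrepr : ∀ x : ℝ,
      P.eval x = t 0 + ∑ j : Fin N, t j.succ * Q.eval (1 * (x - -((j : ℕ) : ℝ))) := by
    intro x
    have := congrArg (Polynomial.eval x) ht
    rw [Polynomial.eval_finset_sum] at this
    rw [← this, Fin.sum_univ_succ]
    simp only [hv_def, Fin.cons_zero, Fin.cons_succ, Polynomial.eval_smul, smul_eq_mul,
      Polynomial.eval_one, mul_one, Polynomial.taylor_eval]
    congr 1
    apply Finset.sum_congr rfl
    intro j _
    congr 1
    ring_nf
  refine iSup_le ?_
  intro x
  have hpt : |P.eval (x : ℝ) -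
      (t 0 + ∑ j : Fin N, t j.succ * ψ (1 * ((x : ℝ) - -((j : ℕ) : ℝ))))|
      ≤ ∑ j : Fin N, |t j.succ| *
        |ψ (1 * ((x : ℝ) - -((j : ℕ) : ℝ))) - Q.eval (1 * ((x : ℝ) - -((j : ℕ) : ℝ)))| := by
    rw [hrepr (x : ℝ)]
    have : (t 0 + ∑ j : Fin N, t j.succ * Q.eval (1 * ((x:ℝ) - -((j : ℕ) : ℝ)))) -
        (t 0 + ∑ j : Fin N, t j.succ * ψ (1 * ((x:ℝ) - -((j : ℕ) : ℝ))))
        = ∑ j : Fin N, t j.succ * (Q.eval (1 * ((x:ℝ) - -((j : ℕ) : ℝ)))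
            - ψ (1 * ((x:ℝ) - -((j : ℕ) : ℝ)))) := by
      simp only [mul_sub]
      rw [Finset.sum_sub_distrib]
      ring
    rw [this]
    refine (Finset.abs_sum_le_sum_abs _ _).trans ?_
    apply Finset.sum_le_sum
    intro j _
    rw [abs_mul, abs_sub_comm]
  calc ENNReal.ofReal |P.eval (x:ℝ) -
        (t 0 + ∑ j : Fin N, t j.succ * ψ (1 * ((x:ℝ) - -((j : ℕ) : ℝ))))|
      ≤ ENNReal.ofReal (∑ j : Fin N, |t j.succ| *
          |ψ (1 * ((x:ℝ) - -((j : ℕ) : ℝ))) - Q.eval (1 * ((x:ℝ) - -((j : ℕ) : ℝ)))|) :=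
        ENNReal.ofReal_le_ofReal hpt
    _ = ∑ j : Fin N, ENNReal.ofReal (|t j.succ| *
          |ψ (1 * ((x:ℝ) - -((j : ℕ) : ℝ))) - Q.eval (1 * ((x:ℝ) - -((j : ℕ) : ℝ)))|) :=
        ENNReal.ofReal_sum_of_nonneg (fun j _ => by positivity)
    _ ≤ ∑ j : Fin N, ENNReal.ofReal |t j.succ| *
          ⨆ y : Set.Icc a b, ENNReal.ofReal
            |ψ (1 * ((y:ℝ) - -((j : ℕ) : ℝ))) - Q.eval (1 * ((y:ℝ) - -((j : ℕ) : ℝ)))| := by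
        apply Finset.sum_le_sum
        intro j _
        rw [ENNReal.ofReal_mul (abs_nonneg _)]
        exact mul_le_mul_right (le_iSup (fun y : Set.Icc a b => ENNReal.ofReal
          |ψ (1 * ((y:ℝ) - -((j : ℕ) : ℝ))) - Q.eval (1 * ((y:ℝ) - -((j : ℕ) : ℝ)))|) x) _
end

section
/- Let ψ : ℝ → ℝ be infinitely differentiable, let N be a natural number, let z_0, …, z_N be real numbers, let u = (u_0, …, u_N) ∈ ℝ^{N+1}, let κ ∈ ℝ, and let I ⊆ ℝ be a nonempty open interval. Suppose that Σ_{l=0}^{N} u_l · ψ(β + z_l) = κ for all β ∈ I, and that there exists β* ∈ I such that the (N+1) × (N+1) real matrix W with entries W_{m,l} = ψ^{(m)}(β* + z_l), indexed by m ∈ {1, …, N+1} and l ∈ {0, …, N} (where ψ^{(m)} denotes the m-th derivative of ψ), is invertible. Then u = 0. -/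
open Topology

lemma iteratedDeriv_const_succ (n : ℕ) (c : ℝ) :
    iteratedDeriv (n + 1) (fun _ : ℝ => c) = fun _ => 0 := by
  induction n with
  | zero => funext x; rw [iteratedDeriv_one]; simp
  | succ n ih => funext x; rw [iteratedDeriv_succ, ih]; simp

lemma sum_iteratedDeriv {N : ℕ} (ψ : ℝ → ℝ) (hψ : ContDiff ℝ (⊤ : ℕ∞) ψ)
    (z u : Fin (N + 1) → ℝ) (n : ℕ) (x : ℝ) :
    iteratedDeriv n (fun β => ∑ l, u l * ψ (β + z l)) x
      = ∑ l, u l * iteratedDeriv n ψ (x + z l) := by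
  have h : ∀ l : Fin (N + 1), ContDiff ℝ n (fun β => u l * ψ (β + z l)) := by
    intro l
    exact ((hψ.of_le (by exact_mod_cast le_top)).comp (contDiff_id.add contDiff_const)).const_smul (u l)
  rw [iteratedDeriv_eq_iteratedFDeriv]
  have : (fun β => ∑ l, u l * ψ (β + z l)) = (∑ l : Fin (N + 1), fun β => u l * ψ (β + z l)) := by
    funext β; simp
  rw [this, show ((∑ l : Fin (N+1), fun β => u l * ψ (β + z l)) : ℝ → ℝ)
      = (fun x => ∑ l : Fin (N+1), (fun β => u l * ψ (β + z l)) x) from by funext; simp,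
    iteratedFDeriv_sum (fun l _ => h l)]
  simp only [ContinuousMultilinearMap.sum_apply, Finset.sum_apply]
  refine Finset.sum_congr rfl fun l _ => ?_
  have := iteratedFDeriv_const_smul_apply (𝕜 := ℝ) (i := n)
    (f := fun β => ψ (β + z l)) (x := x) (a := u l)
    ((hψ.of_le (by exact_mod_cast le_top)).comp (contDiff_id.add contDiff_const)).contDiffAt
  rw [show (fun β => u l * ψ (β + z l)) = (u l • fun β => ψ (β + z l)) from
    by funext β; simp, this]
  have h2 : iteratedDeriv n (fun β => ψ (β + z l)) x = iteratedDeriv n ψ (x + z l) :=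
    congrFun (iteratedDeriv_comp_add_const n ψ (z l)) x
  simp only [iteratedDeriv_eq_iteratedFDeriv] at h2
  simp [this, h2, ← iteratedDeriv_eq_iteratedFDeriv]

/-- Let `ψ : ℝ → ℝ` be infinitely differentiable, `z_0, …, z_N ∈ ℝ`,
`u ∈ ℝ^{N+1}`, `κ ∈ ℝ`, and let `I = (p, q)` be a nonempty open interval. If
`∑_l u_l ψ(β + z_l) = κ` for all `β ∈ I`, and for some `β* ∈ I` the
`(N+1) × (N+1)` matrix `W` with entries `W_{m,l} = ψ^{(m)}(β* + z_l)`
(`m ∈ {1, …, N+1}`, `l ∈ {0, …, N}`; below `m : Fin (N+1)` encodes the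
derivative order `m+1`) is invertible, then `u = 0`. -/
theorem stmt11 (ψ : ℝ → ℝ) (hψ : ContDiff ℝ (⊤ : ℕ∞) ψ) (N : ℕ)
    (z : Fin (N + 1) → ℝ) (u : Fin (N + 1) → ℝ) (κ : ℝ)
    (p q : ℝ) (hpq : p < q)
    (hrel : ∀ β ∈ Set.Ioo p q, ∑ l, u l * ψ (β + z l) = κ)
    (βs : ℝ) (hβs : βs ∈ Set.Ioo p q)
    (hW : IsUnit (Matrix.of fun m l : Fin (N + 1) =>
      iteratedDeriv ((m : ℕ) + 1) ψ (βs + z l))) :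
    u = 0 := by
  set W : Matrix (Fin (N+1)) (Fin (N+1)) ℝ :=
    Matrix.of fun m l : Fin (N + 1) => iteratedDeriv ((m : ℕ) + 1) ψ (βs + z l)
  have heq : (fun β => ∑ l, u l * ψ (β + z l)) =ᶠ[𝓝 βs] (fun _ => κ) := by
    filter_upwards [isOpen_Ioo.mem_nhds hβs] with β hβ using hrel β hβ
  have hzero : ∀ m : Fin (N+1), W.mulVec u m = 0 := by
    intro m
    have h1 := heq.iteratedDeriv_eq ((m : ℕ) + 1)
    rw [sum_iteratedDeriv ψ hψ z u, iteratedDeriv_const_succ] at h1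
    simp only [Matrix.mulVec, dotProduct, W, Matrix.of_apply]
    have h1' : ∑ l, u l * iteratedDeriv ((m : ℕ) + 1) ψ (βs + z l) = 0 := by simpa using h1
    rw [← h1']
    exact Finset.sum_congr rfl fun l _ => mul_comm _ _
  have := Matrix.mulVec_injective_iff_isUnit.2 hW
  have h0 : W.mulVec u = W.mulVec 0 := by
    funext m; simp [hzero m]
  simpa using this h0
end
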